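/- Let $R$ be a commutative ring and let $P(\epsilon_1, \dots, \epsilon_k)$ and $Q(\epsilon_1, \dots, \epsilon_k)$ be the polynomial functions $$P = \sum_{i=1}^k \Big( \big(V - \sum_{j \ne i} v_{\epsilon_j}\big)\mu_i - v_{\epsilon_i}\big(\mu_i + \lambda_i - \tfrac{\ell_i}{n+1}\epsilon_i\big)\Big), \qquad Q = \big(V - \sum_j v_{\epsilon_j}\big)\big(\mu + \sum_j k_j \epsilon_j\big),$$ where $v_\epsilon = \epsilon^n/n!$ with $n \ge 2$, $V \ne 0$, $\lambda_i = \sum_{j \ne i} m_{ij}\epsilon_j + \lambda_i''$ with $m_{ij}, \ell_i \in \mathbb{Z}$, $\lambda_i'', \mu_i, \mu, k_j \in \mathbb{R}$. If $P = Q$ as polynomials in $\epsilon_1, \dots, \epsilon_k$ over $\mathbb{R}$, then $k_j = 0$ for all $j$, $m_{ij} = 0$ for all $i \ne j$, $\lambda_i'' = 0$ and $\ell_i = 0$ for all $i$, and $\mu = \sum_i \mu_i$. -/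

import Mathlib

open MvPolynomial Finset

/-! Write `λ̃ᵢ = λᵢ - ℓᵢ εᵢ / (n + 1)`, an affine form in the `ε`'s. Summing over `i`,
`P - Q = (V - ∑ vⱼ)(∑ μᵢ - μ - ∑ kⱼ εⱼ) - ∑ vᵢ λ̃ᵢ`. Every `vᵢ` is a multiple of `εᵢⁿ` with `n ≥ 2`,
so the part of degree `≤ 1` of `P - Q` is `V (∑ μᵢ - μ - ∑ kⱼ εⱼ)`, which forces `μ = ∑ μᵢ` and
`kⱼ = 0`. What remains is `∑ εᵢⁿ λ̃ᵢ = 0`; for `n ≥ 2` the monomials `εᵢⁿ` and `εᵢⁿ εⱼ` are pairwise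
distinct, so every coefficient of every `λ̃ᵢ` vanishes. -/

theorem Finsupp.single_apply_lt {α : Type*} {a : α} {b n : ℕ} (h : b < n) (x : α) :
    Finsupp.single a b x < n := by
  classical
  rw [Finsupp.single_apply]
  split_ifs <;> omega

theorem Finset.sum_sub_sum_erase_mul {ι A : Type*} [Fintype ι] [DecidableEq ι] [CommRing A]
    (c : A) (v a w : ι → A) :
    ∑ i, ((c - ∑ j ∈ univ.erase i, v j) * a i - v i * (a i + w i))
      = (c - ∑ j, v j) * ∑ i, a i - ∑ i, v i * w i := by
  simp_rw [sum_erase_eq_sub (mem_univ _)]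
  rw [mul_sum, ← sum_sub_distrib]
  exact sum_congr rfl fun i _ => by ring

namespace MvPolynomial

variable {R σ : Type*} [CommSemiring R]

theorem coeff_X_pow_mul_of_lt {d : σ →₀ ℕ} {i : σ} {n : ℕ} (h : d i < n)
    (p : MvPolynomial σ R) : coeff d (X i ^ n * p) = 0 := by
  rw [X_pow_eq_monomial, coeff_monomial_mul', if_neg]
  intro hle
  simpa using (hle i).trans_lt h

variable [Fintype σ]

theorem sum_C_update_mul_X [DecidableEq σ] (b : σ → R) (i : σ) (t : R) :
    ∑ j, C (Function.update b i t j) * X j = ∑ j ∈ univ.erase i, C (b j) * X j + C t * X i := by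
  rw [← sum_erase_add _ _ (mem_univ i), Function.update_self]
  congr 1
  exact sum_congr rfl fun j hj => by rw [Function.update_of_ne (ne_of_mem_erase hj)]

theorem coeff_zero_sum_C_mul_X_add_C (b : σ → R) (a : R) :
    coeff 0 (∑ l, C (b l) * X l + C a) = a := by
  simp [coeff_sum]

theorem coeff_single_one_sum_C_mul_X_add_C (b : σ → R) (a : R) (j : σ) :
    coeff (Finsupp.single j 1) (∑ l, C (b l) * X l + C a) = b j := by
  classical
  simp [coeff_sum, coeff_C_mul, coeff_C_of_ne_zero (Finsupp.single_ne_zero.2 one_ne_zero)]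

theorem coeff_sum_X_pow_mul_of_lt {d : σ →₀ ℕ} {n : ℕ} (h : ∀ l, d l < n)
    (q : σ → MvPolynomial σ R) : coeff d (∑ l, X l ^ n * q l) = 0 := by
  simp only [coeff_sum, coeff_X_pow_mul_of_lt (h _), sum_const_zero]

theorem coeff_single_add_sum_X_pow_mul {d : σ →₀ ℕ} {n : ℕ} (h : ∀ l, d l < n)
    (q : σ → MvPolynomial σ R) (i : σ) :
    coeff (Finsupp.single i n + d) (∑ l, X l ^ n * q l) = coeff d (q i) := by
  rw [coeff_sum, sum_eq_single i]
  · rw [X_pow_eq_monomial, coeff_monomial_mul, one_mul]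
  · intro l _ hl
    apply coeff_X_pow_mul_of_lt
    simpa [Finsupp.single_apply, Ne.symm hl] using h l
  · simp

theorem eq_zero_of_C_mul_affine_eq_sum_X_pow_mul [NoZeroDivisors R] {V : R} (hV : V ≠ 0)
    {n : ℕ} (hn : 2 ≤ n) {b : σ → R} {a : R} {q : σ → MvPolynomial σ R}
    (h : C V * (∑ l, C (b l) * X l + C a) = ∑ l, X l ^ n * q l) :
    (∀ j, b j = 0) ∧ a = 0 := by
  have hlow : ∀ d : σ →₀ ℕ, (∀ l, d l < n) → V * coeff d (∑ l, C (b l) * X l + C a) = 0 :=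
    fun d hd => by rw [← coeff_C_mul, h, coeff_sum_X_pow_mul_of_lt hd]
  refine ⟨fun j => ?_, ?_⟩
  · have := hlow _ (Finsupp.single_apply_lt (a := j) (by omega : 1 < n))
    rwa [coeff_single_one_sum_C_mul_X_add_C, mul_eq_zero, or_iff_right hV] at this
  · have := hlow 0 fun _ => by simp; omega
    rwa [coeff_zero_sum_C_mul_X_add_C, mul_eq_zero, or_iff_right hV] at this

theorem eq_zero_of_sum_X_pow_mul_affine_eq_zero {n : ℕ} (hn : 2 ≤ n) {a : σ → σ → R}
    {c : σ → R} (h : ∑ i, X i ^ n * (∑ j, C (a i j) * X j + C (c i)) = 0) :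
    (∀ i j, a i j = 0) ∧ ∀ i, c i = 0 := by
  have hcoeff : ∀ i, ∀ d : σ →₀ ℕ, (∀ l, d l < n) →
      coeff d (∑ j, C (a i j) * X j + C (c i)) = 0 := fun i d hd => by
    rw [← coeff_single_add_sum_X_pow_mul hd (fun i => ∑ j, C (a i j) * X j + C (c i)), h,
      coeff_zero]
  refine ⟨fun i j => ?_, fun i => ?_⟩
  · simpa only [coeff_single_one_sum_C_mul_X_add_C] using
      hcoeff i _ (Finsupp.single_apply_lt (a := j) (by omega : 1 < n))
  · simpa only [coeff_zero_sum_C_mul_X_add_C] using hcoeff i 0 fun _ => by simp; omega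

end MvPolynomial

/-- The coefficient comparison (eq:volk) in the proof of Proposition
`prop:csympk2` of McDuff's "The symplectomorphism group of a blow up":
if the volume polynomial of the `k`-fold blown-up bundle equals the volume
polynomial of a trivial bundle (as polynomials in `ε₁,…,ε_k`), then all
the blow-up data vanish. -/
theorem stmt_8 (k n : ℕ) (hn : 2 ≤ n) (V : ℝ) (hV : V ≠ 0)
    (μi lam'' : Fin k → ℝ) (m : Fin k → Fin k → ℤ) (ℓ : Fin k → ℤ)
    (μ : ℝ) (kc : Fin k → ℝ)
    (v : Fin k → MvPolynomial (Fin k) ℝ)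
    (hv : ∀ i, v i = C ((n.factorial : ℝ)⁻¹) * (X i) ^ n)
    (lamP : Fin k → MvPolynomial (Fin k) ℝ)
    (hlam : ∀ i, lamP i =
      (∑ j ∈ univ.erase i, C ((m i j : ℝ)) * X j) + C (lam'' i))
    (hPQ :
      (∑ i, ((C V - ∑ j ∈ univ.erase i, v j) * C (μi i)
          - v i * (C (μi i) + lamP i - C ((ℓ i : ℝ) / (n + 1)) * X i)))
        = (C V - ∑ j, v j) * (C μ + ∑ j, C (kc j) * X j)) :
    (∀ j, kc j = 0) ∧ (∀ i j, i ≠ j → m i j = 0) ∧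
    (∀ i, lam'' i = 0 ∧ ℓ i = 0) ∧ μ = ∑ i, μi i := by
  set a : Fin k → Fin k → ℝ := fun i => Function.update (fun j => (m i j : ℝ)) i (-(ℓ i / (n + 1)))
  set L : Fin k → MvPolynomial (Fin k) ℝ := fun i => ∑ j, C (a i j) * X j + C (lam'' i)
  set F := ∑ j, C (-kc j) * X j + C (∑ i, μi i - μ)
  have hL : ∀ i, L i = lamP i - C ((ℓ i : ℝ) / (n + 1)) * X i := fun i => by
    simp only [L, a, sum_C_update_mul_X, hlam, map_neg, neg_mul]
    ring
  simp_rw [add_sub_assoc, ← hL] at hPQ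
  rw [sum_sub_sum_erase_mul, ← map_sum] at hPQ
  have hsplit : (C V - ∑ j, v j) * F = ∑ i, v i * L i := by
    simp only [F, map_sub, map_neg, neg_mul, sum_neg_distrib]
    linear_combination hPQ
  have hvX : ∀ p : Fin k → MvPolynomial (Fin k) ℝ,
      ∑ i, v i * p i = C (n.factorial : ℝ)⁻¹ * ∑ i, X i ^ n * p i := fun p => by
    rw [mul_sum]
    exact sum_congr rfl fun i _ => by rw [hv]; ring
  have hVF : C V * F = ∑ i, X i ^ n * (C (n.factorial : ℝ)⁻¹ * (F + L i)) := by
    rw [sum_congr rfl fun i _ => mul_left_comm (X i ^ n) _ _, ← mul_sum, ← hvX]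
    simp only [mul_add, sum_add_distrib, ← sum_mul]
    linear_combination hsplit
  obtain ⟨hkc, hμ⟩ := eq_zero_of_C_mul_affine_eq_sum_X_pow_mul hV hn hVF
  simp only [neg_eq_zero] at hkc
  have hL0 : ∑ i, X i ^ n * L i = 0 := by
    have hF0 : F = 0 := by simp [F, hkc, hμ]
    have := hvX L
    rw [← hsplit, hF0, mul_zero, eq_comm, mul_eq_zero] at this
    exact this.resolve_left (by simp [Nat.factorial_ne_zero])
  obtain ⟨ha, hlam''⟩ := eq_zero_of_sum_X_pow_mul_affine_eq_zero hn hL0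
  refine ⟨hkc, fun i j hij => ?_, fun i => ⟨hlam'' i, ?_⟩, by linarith⟩
  · simpa [a, Function.update_of_ne hij.symm] using ha i j
  · have := ha i i
    simp only [a, Function.update_self, neg_eq_zero, div_eq_zero_iff] at this
    exact_mod_cast this.resolve_right (by positivity)
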